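/- For all t ∈ [π/3, π/2], the function K(t) := 7√2·(63cos(t)² − 54cos(t)⁴ + 16cos(t)⁶ − 24)/(8cos(t)⁴ − 25cos(t)² + 18)² satisfies −0.76 ≤ K(t) ≤ −0.73, and for all x ∈ [φ, ψ] (φ = (1+√5)/2, ψ = 1+√2) the quantity x²(2 + 2x − 3x²)/(1 + 2x + x² + 3x⁴) lies in [−0.55, −0.25]; consequently x²(2+2x−3x²)/(1+2x+x²+3x⁴)·K(t) ≤ 0.5. -/
import Mathlib


open Real

noncomputable def phi : ℝ := (1 + Real.sqrt 5) / 2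

noncomputable def psi : ℝ := 1 + Real.sqrt 2

noncomputable def K (t : ℝ) : ℝ :=
  7 * Real.sqrt 2 *
      (63 * Real.cos t ^ 2 - 54 * Real.cos t ^ 4 + 16 * Real.cos t ^ 6 - 24) /
    (8 * Real.cos t ^ 4 - 25 * Real.cos t ^ 2 + 18) ^ 2

lemma polyA (c : ℝ) (h0 : 0 ≤ c) (h4 : c ≤ 1/4) :
    9.8994 * (63 * c - 54 * c ^ 2 + 16 * c ^ 3 - 24) + 0.73 * (8 * c ^ 2 - 25 * c + 18) ^ 2 ≤ 0 := by
  nlinarith [mul_nonneg h0 h0, mul_nonneg (mul_nonneg h0 h0) h0,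
    mul_nonneg (sub_nonneg.mpr h4) h0, mul_nonneg (mul_nonneg (sub_nonneg.mpr h4) h0) h0,
    mul_nonneg (mul_nonneg (sub_nonneg.mpr h4) (sub_nonneg.mpr h4)) h0, sq_nonneg c]

lemma polyB (c : ℝ) (h0 : 0 ≤ c) (h4 : c ≤ 1/4) :
    0 ≤ 9.89954 * (63 * c - 54 * c ^ 2 + 16 * c ^ 3 - 24) + 0.76 * (8 * c ^ 2 - 25 * c + 18) ^ 2 := by
  nlinarith [mul_nonneg h0 h0, mul_nonneg (mul_nonneg h0 h0) h0,
    mul_nonneg (sub_nonneg.mpr h4) h0, mul_nonneg (mul_nonneg (sub_nonneg.mpr h4) h0) h0,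
    mul_nonneg (mul_nonneg (sub_nonneg.mpr h4) (sub_nonneg.mpr h4)) h0, sq_nonneg c]

lemma polyC (x : ℝ) (hl : (1.618:ℝ) ≤ x) (hu : x ≤ 2.41422) :
    0 ≤ -27 * x ^ 4 + 40 * x ^ 3 + 51 * x ^ 2 + 22 * x + 11 := by
  nlinarith [mul_nonneg (sub_nonneg.mpr hl) (sub_nonneg.mpr hu),
    mul_nonneg (mul_nonneg (sub_nonneg.mpr hl) (sub_nonneg.mpr hu)) (sub_nonneg.mpr hl),
    mul_nonneg (mul_nonneg (sub_nonneg.mpr hl) (sub_nonneg.mpr hu)) (sub_nonneg.mpr hu),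
    sq_nonneg (x - 2)]

set_option maxHeartbeats 1000000 in
theorem K_and_ratio_bounds :
    (∀ t ∈ Set.Icc (π / 3) (π / 2), -0.76 ≤ K t ∧ K t ≤ -0.73) ∧
    (∀ x ∈ Set.Icc phi psi,
      -0.55 ≤ x ^ 2 * (2 + 2 * x - 3 * x ^ 2) / (1 + 2 * x + x ^ 2 + 3 * x ^ 4) ∧
      x ^ 2 * (2 + 2 * x - 3 * x ^ 2) / (1 + 2 * x + x ^ 2 + 3 * x ^ 4) ≤ -0.25) ∧
    (∀ t ∈ Set.Icc (π / 3) (π / 2), ∀ x ∈ Set.Icc phi psi,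
      x ^ 2 * (2 + 2 * x - 3 * x ^ 2) / (1 + 2 * x + x ^ 2 + 3 * x ^ 4) * K t ≤ 0.5) := by
  have s2 : Real.sqrt 2 ^ 2 = 2 := Real.sq_sqrt (by norm_num)
  have s2n : (0:ℝ) ≤ Real.sqrt 2 := Real.sqrt_nonneg 2
  have s2l : (1.4142:ℝ) ≤ Real.sqrt 2 := by nlinarith
  have s2u : Real.sqrt 2 ≤ 1.41422 := by nlinarith
  have s5 : Real.sqrt 5 ^ 2 = 5 := Real.sq_sqrt (by norm_num)
  have s5n : (0:ℝ) ≤ Real.sqrt 5 := Real.sqrt_nonneg 5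
  have s5l : (2.236:ℝ) ≤ Real.sqrt 5 := by nlinarith
  have hK : ∀ t ∈ Set.Icc (π / 3) (π / 2), -0.76 ≤ K t ∧ K t ≤ -0.73 := by
    intro t ht
    obtain ⟨h1, h2⟩ := ht
    have hpi : (0:ℝ) < π := Real.pi_pos
    have hcu : Real.cos t ≤ 1 / 2 := by
      have := Real.cos_le_cos_of_nonneg_of_le_pi (by positivity : (0:ℝ) ≤ π / 3)
        (by linarith : t ≤ π) h1
      rwa [Real.cos_pi_div_three] at this
    have hcl : 0 ≤ Real.cos t :=
      Real.cos_nonneg_of_mem_Icc ⟨by linarith, h2⟩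
    set c := Real.cos t ^ 2 with hc
    have hc0 : 0 ≤ c := sq_nonneg _
    have hc4 : c ≤ 1 / 4 := by nlinarith
    have hKt : K t = 7 * Real.sqrt 2 * (63 * c - 54 * c ^ 2 + 16 * c ^ 3 - 24) /
        (8 * c ^ 2 - 25 * c + 18) ^ 2 := by
      unfold K; rw [hc]; ring_nf
    have hD : (0:ℝ) < (8 * c ^ 2 - 25 * c + 18) ^ 2 := by nlinarith
    have hN : 63 * c - 54 * c ^ 2 + 16 * c ^ 3 - 24 ≤ 0 := by nlinarith
    have hA := polyA c hc0 hc4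
    have hB := polyB c hc0 hc4
    set N := 63 * c - 54 * c ^ 2 + 16 * c ^ 3 - 24 with hNdef
    have hup : 7 * Real.sqrt 2 * N ≤ 9.8994 * N := by
      have h7 : (9.8994:ℝ) ≤ 7 * Real.sqrt 2 := by linarith
      have := mul_nonneg (sub_nonneg.mpr h7) (neg_nonneg.mpr hN)
      nlinarith [this]
    have hlo : 9.89954 * N ≤ 7 * Real.sqrt 2 * N := by
      have h7 : 7 * Real.sqrt 2 ≤ (9.89954:ℝ) := by linarith
      have := mul_nonneg (sub_nonneg.mpr h7) (neg_nonneg.mpr hN)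
      nlinarith [this]
    constructor
    · rw [hKt, le_div_iff₀ hD]; linarith
    · rw [hKt, div_le_iff₀ hD]; linarith
  have hR : ∀ x ∈ Set.Icc phi psi,
      -0.55 ≤ x ^ 2 * (2 + 2 * x - 3 * x ^ 2) / (1 + 2 * x + x ^ 2 + 3 * x ^ 4) ∧
      x ^ 2 * (2 + 2 * x - 3 * x ^ 2) / (1 + 2 * x + x ^ 2 + 3 * x ^ 4) ≤ -0.25 := by
    intro x hx
    obtain ⟨h1, h2⟩ := hx
    rw [phi] at h1; rw [psi] at h2
    have hxl : (1.618:ℝ) ≤ x := by linarith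
    have hxu : x ≤ 2.41422 := by linarith
    have hgold : 0 ≤ x ^ 2 - x - 1 := by nlinarith
    have hden : (0:ℝ) < 1 + 2 * x + x ^ 2 + 3 * x ^ 4 := by positivity
    constructor
    · rw [le_div_iff₀ hden]
      have := polyC x hxl hxu
      nlinarith
    · rw [div_le_iff₀ hden]
      nlinarith [mul_nonneg hgold (by nlinarith : (0:ℝ) ≤ 9 * x ^ 2 + x + 1)]
  refine ⟨hK, hR, ?_⟩
  intro t ht x hx
  obtain ⟨hK1, hK2⟩ := hK t ht
  obtain ⟨hR1, hR2⟩ := hR x hx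
  nlinarith [hK1, hK2, hR1, hR2]
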